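/- arXiv:0804.1758 — 7 statements merged into one kernel-verified Lean document; each statement's English description precedes it below -/
import Mathlib

section
/- The relation ⊑ on nonempty subsets of a lattice L, defined by Y₁ ⊑ Y₂ iff for all y₁ ∈ Y₁ and y₂ ∈ Y₂, y₁ ∧ y₂ ∈ Y₁ and y₁ ∨ y₂ ∈ Y₂, is transitive and antisymmetric. -/
/-- The Topkis relation `⊑` on subsets of a lattice. -/
def topkis {L : Type*} [Lattice L] (Y₁ Y₂ : Set L) : Prop :=
  ∀ y₁ ∈ Y₁, ∀ y₂ ∈ Y₂, y₁ ⊓ y₂ ∈ Y₁ ∧ y₁ ⊔ y₂ ∈ Y₂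

namespace topkis

variable {L : Type*} [Lattice L] {Y₁ Y₂ Y₃ : Set L}

/-- The middle set is only needed to supply an intermediate point `y₂`: then
`y₁ ⊓ y₃ = y₁ ⊓ ((y₁ ⊔ y₂) ⊓ y₃)` and `y₁ ⊔ y₃ = (y₁ ⊔ (y₂ ⊓ y₃)) ⊔ y₃`. -/
theorem trans (h₂ : Y₂.Nonempty) (h₁₂ : topkis Y₁ Y₂) (h₂₃ : topkis Y₂ Y₃) :
    topkis Y₁ Y₃ := by
  intro y₁ hy₁ y₃ hy₃
  obtain ⟨y₂, hy₂⟩ := h₂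
  constructor
  · have hmid : (y₁ ⊔ y₂) ⊓ y₃ ∈ Y₂ := (h₂₃ _ (h₁₂ y₁ hy₁ y₂ hy₂).2 y₃ hy₃).1
    have key : y₁ ⊓ ((y₁ ⊔ y₂) ⊓ y₃) = y₁ ⊓ y₃ := by rw [← inf_assoc, inf_sup_self]
    simpa only [key] using (h₁₂ y₁ hy₁ _ hmid).1
  · have hmid : y₁ ⊔ (y₂ ⊓ y₃) ∈ Y₂ := (h₁₂ y₁ hy₁ _ (h₂₃ y₂ hy₂ y₃ hy₃).1).2
    have key : y₁ ⊔ (y₂ ⊓ y₃) ⊔ y₃ = y₁ ⊔ y₃ := by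
      rw [sup_assoc, sup_eq_right.2 (inf_le_right : y₂ ⊓ y₃ ≤ y₃)]
    simpa only [key] using (h₂₃ _ hmid y₃ hy₃).2

/-- For `x ∈ Y₁` and any `y ∈ Y₂`, the point `(x ⊔ y) ⊓ x = x` lies in `Y₂`. -/
theorem subset_of_symm (h₂ : Y₂.Nonempty) (h₁₂ : topkis Y₁ Y₂) (h₂₁ : topkis Y₂ Y₁) :
    Y₁ ⊆ Y₂ := by
  intro x hx
  obtain ⟨y, hy⟩ := h₂
  have key : (x ⊔ y) ⊓ x = x := inf_eq_right.2 le_sup_left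
  simpa only [key] using (h₂₁ _ (h₁₂ x hx y hy).2 x hx).1

end topkis

theorem topkis_trans_antisymm {L : Type*} [Lattice L] :
    (∀ Y₁ Y₂ Y₃ : Set L, Y₁.Nonempty → Y₂.Nonempty → Y₃.Nonempty →
      topkis Y₁ Y₂ → topkis Y₂ Y₃ → topkis Y₁ Y₃) ∧
    (∀ Y₁ Y₂ : Set L, Y₁.Nonempty → Y₂.Nonempty →
      topkis Y₁ Y₂ → topkis Y₂ Y₁ → Y₁ = Y₂) :=
  ⟨fun _ _ _ _ h₂ _ h₁₂ h₂₃ => h₁₂.trans h₂ h₂₃,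
    fun _ _ h₁ h₂ h₁₂ h₂₁ =>
      (topkis.subset_of_symm h₂ h₁₂ h₂₁).antisymm (topkis.subset_of_symm h₁ h₂₁ h₁₂)⟩
end

section
/- If L is a linearly ordered lattice and I₁, I₂ are nonempty preference intervals of L, then the set J := { a₁ ∨ a₂ | a₁ ∈ I₁, a₂ ∈ I₂ } is a nonempty preference interval and is the least upper bound of I₁ and I₂ with respect to the order ⊑. -/
/-!
The join set is `I₁ ⊻ I₂`. Between `a₁ ⊔ a₂` and `b₁ ⊔ b₂` a point `z` splits, by distributivity,
as `(a₁ ⊔ z ⊓ b₁) ⊔ (a₂ ⊔ z ⊓ b₂)`, whose two parts lie in the intervals `[a₁, a₁ ⊔ b₁] ⊆ I₁` and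
`[a₂, a₂ ⊔ b₂] ⊆ I₂`. The rest only uses that in a linear order every set is closed under `⊔`
and `⊓`.
-/

open scoped SetFamily

namespace Set

variable {α : Type*}

section DistribLattice

variable [DistribLattice α] {s t K : Set α}

theorem OrdConnected.sups (hs : s.OrdConnected) (ht : t.OrdConnected)
    (hs' : SupClosed s) (ht' : SupClosed t) : (s ⊻ t).OrdConnected := by
  refine ⟨?_⟩
  rintro _ ⟨a₁, ha₁, a₂, ha₂, rfl⟩ _ ⟨b₁, hb₁, b₂, hb₂, rfl⟩ z ⟨hza, hzb⟩
  have hsplit : (a₁ ⊔ z ⊓ b₁) ⊔ (a₂ ⊔ z ⊓ b₂) = z := by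
    calc (a₁ ⊔ z ⊓ b₁) ⊔ (a₂ ⊔ z ⊓ b₂) = (a₁ ⊔ a₂) ⊔ z ⊓ (b₁ ⊔ b₂) := by
          rw [inf_sup_left]; ac_rfl
      _ = z := by rw [inf_eq_left.mpr hzb, sup_eq_right.mpr hza]
  refine ⟨a₁ ⊔ z ⊓ b₁, ?_, a₂ ⊔ z ⊓ b₂, ?_, hsplit⟩
  · exact hs.out ha₁ (hs' ha₁ hb₁) ⟨le_sup_left, sup_le_sup_left inf_le_right _⟩
  · exact ht.out ha₂ (ht' ha₂ hb₂) ⟨le_sup_left, sup_le_sup_left inf_le_right _⟩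

theorem topkis_sups_of_topkis (hsK : topkis s K) (htK : topkis t K) (hK : SupClosed K) :
    topkis (s ⊻ t) K := by
  rintro _ ⟨a₁, ha₁, a₂, ha₂, rfl⟩ k hk
  refine ⟨⟨a₁ ⊓ k, (hsK a₁ ha₁ k hk).1, a₂ ⊓ k, (htK a₂ ha₂ k hk).1, (inf_sup_right ..).symm⟩, ?_⟩
  have hsplit : a₁ ⊔ a₂ ⊔ k = (a₁ ⊔ k) ⊔ (a₂ ⊔ k) := by ac_rfl
  exact hsplit ▸ hK (hsK a₁ ha₁ k hk).2 (htK a₂ ha₂ k hk).2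

end DistribLattice

section Lattice

variable [Lattice α] {s : Set α}

theorem topkis_sups_left (hs : s.OrdConnected) (hs_sup : SupClosed s) (hs_inf : InfClosed s)
    (t : Set α) : topkis s (s ⊻ t) := by
  rintro y hy _ ⟨a₁, ha₁, a₂, ha₂, rfl⟩
  refine ⟨hs.out (hs_inf hy ha₁) hy ⟨inf_le_inf_left _ le_sup_left, inf_le_left⟩, ?_⟩
  exact ⟨y ⊔ a₁, hs_sup hy ha₁, a₂, ha₂, sup_assoc ..⟩

theorem topkis_sups_right (hs : s.OrdConnected) (hs_sup : SupClosed s) (hs_inf : InfClosed s)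
    (t : Set α) : topkis s (t ⊻ s) :=
  sups_comm s t ▸ topkis_sups_left hs hs_sup hs_inf t

end Lattice

end Set

open Set in
theorem join_of_intervals_is_lub {L : Type*} [LinearOrder L] (I₁ I₂ : Set L)
    (h₁ : I₁.Nonempty) (h₂ : I₂.Nonempty)
    (c₁ : I₁.OrdConnected) (c₂ : I₂.OrdConnected) :
    (({z | ∃ a₁ ∈ I₁, ∃ a₂ ∈ I₂, z = a₁ ⊔ a₂} : Set L)).Nonempty ∧
    ({z | ∃ a₁ ∈ I₁, ∃ a₂ ∈ I₂, z = a₁ ⊔ a₂} : Set L).OrdConnected ∧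
    topkis I₁ {z | ∃ a₁ ∈ I₁, ∃ a₂ ∈ I₂, z = a₁ ⊔ a₂} ∧
    topkis I₂ {z | ∃ a₁ ∈ I₁, ∃ a₂ ∈ I₂, z = a₁ ⊔ a₂} ∧
    ∀ K : Set L, K.Nonempty → K.OrdConnected → topkis I₁ K → topkis I₂ K →
      topkis {z | ∃ a₁ ∈ I₁, ∃ a₂ ∈ I₂, z = a₁ ⊔ a₂} K := by
  have hJ : {z | ∃ a₁ ∈ I₁, ∃ a₂ ∈ I₂, z = a₁ ⊔ a₂} = I₁ ⊻ I₂ := by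
    ext; simp only [mem_ofPred_eq, mem_sups, eq_comm]
  rw [hJ]
  exact ⟨h₁.sups h₂,
    c₁.sups c₂ (LinearOrder.supClosed _) (LinearOrder.supClosed _),
    topkis_sups_left c₁ (LinearOrder.supClosed _) (LinearOrder.infClosed _) I₂,
    topkis_sups_right c₂ (LinearOrder.supClosed _) (LinearOrder.infClosed _) I₁,
    fun K _ _ hK₁ hK₂ => topkis_sups_of_topkis hK₁ hK₂ (LinearOrder.supClosed K)⟩
end

section
/- For a linearly ordered lattice L, the set I_L of nonempty preference intervals of L, ordered by ⊑, forms a lattice containing L as the sublattice of singletons, with join [a₁,b₁] ⊔ [a₂,b₂] = [a₁∨a₂, b₁∨b₂] and meet [a₁,b₁] ⊓ [a₂,b₂] = [a₁∧a₂, b₁∧b₂] on closed intervals. -/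
/-- The set of nonempty preference intervals of `L`. -/
def IL (L : Type*) [Lattice L] := {I : Set L // I.Nonempty ∧ I.OrdConnected}

/-- The closed interval `[a,b]` (with `a ≤ b`) as a nonempty preference interval. -/
def mkIcc {L : Type*} [Lattice L] {a b : L} (h : a ≤ b) : IL L :=
  ⟨Set.Icc a b, Set.nonempty_Icc.mpr h, Set.ordConnected_Icc⟩

/-- The singleton `{a}` as a nonempty preference interval. -/
def mkSingle {L : Type*} [Lattice L] (a : L) : IL L :=
  ⟨{a}, Set.singleton_nonempty a, Set.ordConnected_singleton⟩

/-- `≤`, `⊔`, `⊓` of an explicitly given lattice structure. -/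
def lle {α : Type*} (inst : Lattice α) (x y : α) : Prop := letI := inst; x ≤ y
def lsup {α : Type*} (inst : Lattice α) (x y : α) : α := letI := inst; x ⊔ y
def linf {α : Type*} (inst : Lattice α) (x y : α) : α := letI := inst; x ⊓ y

open Set

section Closures

variable {L : Type*}

theorem upperClosure_Icc [Preorder L] {a b : L} (h : a ≤ b) :
    upperClosure (Icc a b) = UpperSet.Ici a :=
  SetLike.ext fun _ => mem_upperClosure.trans
    ⟨fun ⟨_, hy, hyx⟩ => hy.1.trans hyx, fun hx => ⟨a, ⟨le_rfl, h⟩, hx⟩⟩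

theorem lowerClosure_Icc [Preorder L] {a b : L} (h : a ≤ b) :
    lowerClosure (Icc a b) = LowerSet.Iic b :=
  SetLike.ext fun _ => mem_lowerClosure.trans
    ⟨fun ⟨_, hy, hxy⟩ => hxy.trans hy.2, fun hx => ⟨b, ⟨h, le_rfl⟩, hx⟩⟩

theorem upperClosure_upperSet_inter_lowerSet [LinearOrder L] {U : UpperSet L} {D : LowerSet L}
    (h : (↑U ∩ ↑D : Set L).Nonempty) : upperClosure (↑U ∩ ↑D : Set L) = U := by
  refine SetLike.ext fun x =>
    mem_upperClosure.trans ⟨fun ⟨y, hy, hyx⟩ => U.upper hyx hy.1, fun hx => ?_⟩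
  obtain ⟨z, hzU, hzD⟩ := h
  rcases le_total z x with hzx | hxz
  · exact ⟨z, ⟨hzU, hzD⟩, hzx⟩
  · exact ⟨x, ⟨hx, D.lower hxz hzD⟩, le_rfl⟩

theorem lowerClosure_upperSet_inter_lowerSet [LinearOrder L] {U : UpperSet L} {D : LowerSet L}
    (h : (↑U ∩ ↑D : Set L).Nonempty) : lowerClosure (↑U ∩ ↑D : Set L) = D := by
  refine SetLike.ext fun x =>
    mem_lowerClosure.trans ⟨fun ⟨y, hy, hxy⟩ => D.lower hxy hy.2, fun hx => ?_⟩
  obtain ⟨z, hzU, hzD⟩ := h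
  rcases le_total x z with hxz | hzx
  · exact ⟨z, ⟨hzU, hzD⟩, hxz⟩
  · exact ⟨x, ⟨U.upper hzx hzU, hx⟩, le_rfl⟩

variable [LinearOrder L] {U₁ U₂ : UpperSet L} {D₁ D₂ : LowerSet L}

-- Upper sets of a chain are totally ordered by inclusion, so one of the two witnesses survives.
theorem inter_sup_nonempty (h₁ : (↑U₁ ∩ ↑D₁ : Set L).Nonempty)
    (h₂ : (↑U₂ ∩ ↑D₂ : Set L).Nonempty) : (↑(U₁ ⊔ U₂) ∩ ↑(D₁ ⊔ D₂) : Set L).Nonempty := by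
  rcases le_total U₁ U₂ with hU | hU
  · rw [sup_eq_right.2 hU]
    exact h₂.mono (inter_subset_inter_right _ (LowerSet.coe_subset_coe.2 le_sup_right))
  · rw [sup_eq_left.2 hU]
    exact h₁.mono (inter_subset_inter_right _ (LowerSet.coe_subset_coe.2 le_sup_left))

theorem inter_inf_nonempty (h₁ : (↑U₁ ∩ ↑D₁ : Set L).Nonempty)
    (h₂ : (↑U₂ ∩ ↑D₂ : Set L).Nonempty) : (↑(U₁ ⊓ U₂) ∩ ↑(D₁ ⊓ D₂) : Set L).Nonempty := by
  rcases le_total D₁ D₂ with hD | hD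
  · rw [inf_eq_left.2 hD]
    exact h₁.mono (inter_subset_inter_left _ (UpperSet.coe_subset_coe.2 inf_le_left))
  · rw [inf_eq_right.2 hD]
    exact h₂.mono (inter_subset_inter_left _ (UpperSet.coe_subset_coe.2 inf_le_right))

end Closures

section Topkis

variable {L : Type*}

theorem topkis.lowerClosure_le [Lattice L] {S T : Set L} (h : topkis S T) (hT : T.Nonempty) :
    lowerClosure S ≤ lowerClosure T := by
  obtain ⟨t, ht⟩ := hT
  rintro x ⟨s, hs, hxs⟩
  exact ⟨s ⊔ t, (h s hs t ht).2, hxs.trans le_sup_left⟩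

theorem topkis.upperClosure_le [Lattice L] {S T : Set L} (h : topkis S T) (hS : S.Nonempty) :
    upperClosure S ≤ upperClosure T := by
  obtain ⟨s, hs⟩ := hS
  rintro x ⟨t, ht, htx⟩
  exact ⟨s ⊓ t, (h s hs t ht).1, inf_le_right.trans htx⟩

-- In a chain `s ⊓ t, s ⊔ t` is `s, t` unless `t ≤ s`; then `t ∈ ↑T ⊆ ↑S` and `s ∈ ↓S ⊆ ↓T`.
theorem topkis_of_closures_le [LinearOrder L] {S T : Set L} (hS : S.OrdConnected)
    (hT : T.OrdConnected) (hU : upperClosure S ≤ upperClosure T)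
    (hD : lowerClosure S ≤ lowerClosure T) : topkis S T := by
  intro s hs t ht
  rcases le_total s t with hst | hts
  · rw [inf_eq_left.2 hst, sup_eq_right.2 hst]
    exact ⟨hs, ht⟩
  · rw [inf_eq_right.2 hts, sup_eq_left.2 hts]
    refine ⟨?_, ?_⟩
    · rw [← hS.upperClosure_inter_lowerClosure]
      exact ⟨hU (subset_upperClosure ht), s, hs, hts⟩
    · rw [← hT.upperClosure_inter_lowerClosure]
      exact ⟨⟨t, ht, hts⟩, hD (subset_lowerClosure hs)⟩

end Topkis

namespace IL

variable {L : Type*}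

def closures [Lattice L] (I : IL L) : UpperSet L × LowerSet L :=
  (upperClosure I.1, lowerClosure I.1)

theorem closures_injective [Lattice L] : Function.Injective (closures : IL L → _) :=
  fun I J h => Subtype.ext <| by
    rw [← I.2.2.upperClosure_inter_lowerClosure, ← J.2.2.upperClosure_inter_lowerClosure]
    simp only [closures, Prod.ext_iff] at h
    rw [h.1, h.2]

variable [LinearOrder L]

theorem topkis_iff_closures_le {I J : IL L} : topkis I.1 J.1 ↔ closures I ≤ closures J :=
  ⟨fun h => ⟨h.upperClosure_le I.2.1, h.lowerClosure_le J.2.1⟩,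
    fun h => topkis_of_closures_le I.2.2 J.2.2 h.1 h.2⟩

theorem inter_closures_nonempty (I : IL L) :
    (↑(closures I).1 ∩ ↑(closures I).2 : Set L).Nonempty := by
  rw [closures, I.2.2.upperClosure_inter_lowerClosure]
  exact I.2.1

def ofClosures (p : UpperSet L × LowerSet L) (h : (↑p.1 ∩ ↑p.2 : Set L).Nonempty) : IL L :=
  ⟨↑p.1 ∩ ↑p.2, h, p.1.upper.ordConnected.inter p.2.lower.ordConnected⟩

theorem closures_ofClosures (p : UpperSet L × LowerSet L) (h : (↑p.1 ∩ ↑p.2 : Set L).Nonempty) :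
    closures (ofClosures p h) = p :=
  Prod.ext (upperClosure_upperSet_inter_lowerSet h) (lowerClosure_upperSet_inter_lowerSet h)

instance : LE (IL L) := ⟨fun I J => topkis I.1 J.1⟩

instance : LT (IL L) := ⟨fun I J => I ≤ J ∧ ¬J ≤ I⟩

instance : Max (IL L) :=
  ⟨fun I J => ofClosures (closures I ⊔ closures J)
    (inter_sup_nonempty (inter_closures_nonempty I) (inter_closures_nonempty J))⟩

instance : Min (IL L) :=
  ⟨fun I J => ofClosures (closures I ⊓ closures J)
    (inter_inf_nonempty (inter_closures_nonempty I) (inter_closures_nonempty J))⟩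

noncomputable instance : Lattice (IL L) :=
  closures_injective.lattice closures topkis_iff_closures_le.symm
    (by intro I J; rw [lt_iff_le_not_ge, ← topkis_iff_closures_le, ← topkis_iff_closures_le]; rfl)
    (fun _ _ => closures_ofClosures _ _) (fun _ _ => closures_ofClosures _ _)

theorem val_sup (I J : IL L) :
    (I ⊔ J).1 = ↑(closures I ⊔ closures J).1 ∩ ↑(closures I ⊔ closures J).2 := rfl

theorem val_inf (I J : IL L) :
    (I ⊓ J).1 = ↑(closures I ⊓ closures J).1 ∩ ↑(closures I ⊓ closures J).2 := rfl

theorem closures_mkIcc {a b : L} (h : a ≤ b) :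
    closures (mkIcc h) = (UpperSet.Ici a, LowerSet.Iic b) :=
  Prod.ext (upperClosure_Icc h) (lowerClosure_Icc h)

theorem mkIcc_sup_mkIcc {a₁ b₁ a₂ b₂ : L} (h₁ : a₁ ≤ b₁) (h₂ : a₂ ≤ b₂) :
    (mkIcc h₁ ⊔ mkIcc h₂).1 = Icc (a₁ ⊔ a₂) (b₁ ⊔ b₂) := by
  rw [val_sup, closures_mkIcc, closures_mkIcc]
  ext x
  simp

theorem mkIcc_inf_mkIcc {a₁ b₁ a₂ b₂ : L} (h₁ : a₁ ≤ b₁) (h₂ : a₂ ≤ b₂) :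
    (mkIcc h₁ ⊓ mkIcc h₂).1 = Icc (a₁ ⊓ a₂) (b₁ ⊓ b₂) := by
  rw [val_inf, closures_mkIcc, closures_mkIcc]
  ext x
  simp

theorem mkSingle_eq_mkIcc (a : L) : mkSingle a = mkIcc (le_refl a) :=
  Subtype.ext (Icc_self a).symm

theorem mkSingle_sup_mkSingle (a b : L) : mkSingle a ⊔ mkSingle b = mkSingle (a ⊔ b) := by
  simp only [mkSingle_eq_mkIcc]
  exact Subtype.ext (mkIcc_sup_mkIcc _ _)

theorem mkSingle_inf_mkSingle (a b : L) : mkSingle a ⊓ mkSingle b = mkSingle (a ⊓ b) := by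
  simp only [mkSingle_eq_mkIcc]
  exact Subtype.ext (mkIcc_inf_mkIcc _ _)

end IL

theorem IL_lattice {L : Type*} [LinearOrder L] :
    ∃ inst : Lattice (IL L),
      (∀ I J : IL L, lle inst I J ↔ topkis I.1 J.1) ∧
      (∀ (a₁ b₁ a₂ b₂ : L) (h₁ : a₁ ≤ b₁) (h₂ : a₂ ≤ b₂),
        (lsup inst (mkIcc h₁) (mkIcc h₂)).1 = Set.Icc (a₁ ⊔ a₂) (b₁ ⊔ b₂) ∧
        (linf inst (mkIcc h₁) (mkIcc h₂)).1 = Set.Icc (a₁ ⊓ a₂) (b₁ ⊓ b₂)) ∧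
      (∀ a b : L,
        lsup inst (mkSingle a) (mkSingle b) = mkSingle (a ⊔ b) ∧
        linf inst (mkSingle a) (mkSingle b) = mkSingle (a ⊓ b)) :=
  ⟨inferInstance, fun _ _ => Iff.rfl,
    fun _ _ _ _ h₁ h₂ => ⟨IL.mkIcc_sup_mkIcc h₁ h₂, IL.mkIcc_inf_mkIcc h₁ h₂⟩,
    fun a b => ⟨IL.mkSingle_sup_mkSingle a b, IL.mkSingle_inf_mkSingle a b⟩⟩
end

section
/- Let M be an ordered set, L a linearly ordered lattice, and φ a correspondence from M to nonempty preference intervals of L. Then φ is increasing (i.e., whenever (x₁,y₂), (x₂,y₁) are in the graph of φ with x₁ ≤ x₂ and y₁ ≤ y₂, the whole rectangle [x₁,x₂]×[y₁,y₂] lies in the graph) if and only if x₁ ≤ x₂ implies φ(x₁) ⊑ φ(x₂). -/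
/-!
Over a chain, `Y₁ ⊑ Y₂` only says that whenever `y₂ ∈ Y₂` lies below `y₁ ∈ Y₁`, the two points
may be swapped; that is the rectangle condition at the two corners `(x₁, y₂)` and `(x₂, y₁)`.
Conversely, if `φ x₁ ⊑ φ x ⊑ φ x₂` and `y₁ ≤ y₂`, joining `y₂ ∈ φ x₁` with any point of `φ x` and
meeting the result with `y₁ ∈ φ x₂` gives `y₁ ∈ φ x`; then `y₂ = y₂ ⊔ y₁ ∈ φ x`, and `φ x` is an
interval. This half works in any lattice.
-/

theorem topkis_iff_forall_le {L : Type*} [LinearOrder L] {Y₁ Y₂ : Set L} :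
    topkis Y₁ Y₂ ↔ ∀ y₁ ∈ Y₁, ∀ y₂ ∈ Y₂, y₂ ≤ y₁ → y₂ ∈ Y₁ ∧ y₁ ∈ Y₂ := by
  constructor
  · intro h y₁ hy₁ y₂ hy₂ hle
    simpa only [inf_eq_right.2 hle, sup_eq_left.2 hle] using h y₁ hy₁ y₂ hy₂
  · intro h y₁ hy₁ y₂ hy₂
    rcases le_total y₁ y₂ with hle | hle
    · rw [inf_eq_left.2 hle, sup_eq_right.2 hle]
      exact ⟨hy₁, hy₂⟩
    · rw [inf_eq_right.2 hle, sup_eq_left.2 hle]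
      exact h y₁ hy₁ y₂ hy₂ hle

theorem topkis.mem_of_le {L : Type*} [Lattice L] {A B C : Set L} (hAB : topkis A B)
    (hBC : topkis B C) (hB : B.Nonempty) {a c : L} (ha : a ∈ A) (hc : c ∈ C) (hca : c ≤ a) :
    c ∈ B ∧ a ∈ B := by
  obtain ⟨z, hz⟩ := hB
  have hcB : c ∈ B := by
    simpa only [inf_eq_right.2 (hca.trans le_sup_left)] using (hBC _ (hAB a ha z hz).2 c hc).1
  have haB : a ∈ B := by
    simpa only [sup_eq_left.2 hca] using (hAB a ha c hcB).2
  exact ⟨hcB, haB⟩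

theorem topkis.Icc_subset {L : Type*} [Lattice L] {A B C : Set L} (hAB : topkis A B)
    (hBC : topkis B C) (hB : B.Nonempty) (hBconn : B.OrdConnected) {a c : L} (ha : a ∈ A)
    (hc : c ∈ C) (hca : c ≤ a) : Set.Icc c a ⊆ B :=
  let ⟨hcB, haB⟩ := hAB.mem_of_le hBC hB ha hc hca
  hBconn.out hcB haB

theorem increasing_iff_topkis_monotone {M L : Type*} [PartialOrder M] [LinearOrder L]
    (φ : M → Set L) (hne : ∀ x, (φ x).Nonempty) (hconn : ∀ x, (φ x).OrdConnected) :
    (∀ x₁ x₂ y₁ y₂ : _, x₁ ≤ x₂ → y₁ ≤ y₂ → y₂ ∈ φ x₁ → y₁ ∈ φ x₂ →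
        ∀ x ∈ Set.Icc x₁ x₂, ∀ y ∈ Set.Icc y₁ y₂, y ∈ φ x) ↔
    (∀ x₁ x₂ : M, x₁ ≤ x₂ → topkis (φ x₁) (φ x₂)) := by
  constructor
  · intro hinc x₁ x₂ hx
    refine topkis_iff_forall_le.2 fun y₁ hy₁ y₂ hy₂ hy ↦ ⟨?_, ?_⟩
    · exact hinc x₁ x₂ y₂ y₁ hx hy hy₁ hy₂ x₁ ⟨le_rfl, hx⟩ y₂ ⟨le_rfl, hy⟩
    · exact hinc x₁ x₂ y₂ y₁ hx hy hy₁ hy₂ x₂ ⟨hx, le_rfl⟩ y₁ ⟨hy, le_rfl⟩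
  · intro hmono x₁ x₂ y₁ y₂ _ hy hy₂ hy₁ x ⟨hx₁, hx₂⟩
    exact (hmono x₁ x hx₁).Icc_subset (hmono x x₂ hx₂) (hne x) (hconn x) hy₂ hy₁ hy
end

section
/- In a linearly ordered lattice L, for nonempty preference intervals I₁, I₂: I₁ ⊑ I₂ holds if and only if for each a₁ ∈ I₁ there exists a₂ ∈ I₂ with a₁ ≤ a₂, and for each b₂ ∈ I₂ there exists b₁ ∈ I₁ with b₁ ≤ b₂. -/
/-! The forward direction holds in any lattice: `a₁ ⊔ y₂` and `y₁ ⊓ b₂` are the required witnesses.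
Conversely, in a chain `y₁ ⊓ y₂` and `y₁ ⊔ y₂` are just `y₁` and `y₂` in some order, so only the
case `y₂ ≤ y₁` needs work; there `b₁ ≤ y₂ ≤ y₁` and `y₂ ≤ y₁ ≤ a₂` put `y₂` in `I₁` and `y₁` in
`I₂` by order-convexity. -/

namespace topkis

variable {L : Type*} [Lattice L] {Y₁ Y₂ : Set L}

theorem exists_mem_right_ge (h : topkis Y₁ Y₂) (hY₂ : Y₂.Nonempty) {a₁ : L} (ha₁ : a₁ ∈ Y₁) :
    ∃ a₂ ∈ Y₂, a₁ ≤ a₂ :=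
  let ⟨y₂, hy₂⟩ := hY₂
  ⟨a₁ ⊔ y₂, (h a₁ ha₁ y₂ hy₂).2, le_sup_left⟩

theorem exists_mem_left_le (h : topkis Y₁ Y₂) (hY₁ : Y₁.Nonempty) {b₂ : L} (hb₂ : b₂ ∈ Y₂) :
    ∃ b₁ ∈ Y₁, b₁ ≤ b₂ :=
  let ⟨y₁, hy₁⟩ := hY₁
  ⟨y₁ ⊓ b₂, (h y₁ hy₁ b₂ hb₂).1, inf_le_right⟩

end topkis

section LinearOrder

variable {L : Type*} [LinearOrder L] {I₁ I₂ : Set L}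

theorem topkis_of_forall_ge (h : ∀ y₁ ∈ I₁, ∀ y₂ ∈ I₂, y₂ ≤ y₁ → y₂ ∈ I₁ ∧ y₁ ∈ I₂) :
    topkis I₁ I₂ := by
  intro y₁ hy₁ y₂ hy₂
  rcases le_total y₁ y₂ with hle | hle
  · rw [inf_eq_left.mpr hle, sup_eq_right.mpr hle]
    exact ⟨hy₁, hy₂⟩
  · rw [inf_eq_right.mpr hle, sup_eq_left.mpr hle]
    exact h y₁ hy₁ y₂ hy₂ hle

theorem topkis_of_forall_exists_le (c₁ : I₁.OrdConnected) (c₂ : I₂.OrdConnected)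
    (hA : ∀ a₁ ∈ I₁, ∃ a₂ ∈ I₂, a₁ ≤ a₂) (hB : ∀ b₂ ∈ I₂, ∃ b₁ ∈ I₁, b₁ ≤ b₂) :
    topkis I₁ I₂ := by
  refine topkis_of_forall_ge fun y₁ hy₁ y₂ hy₂ hle => ?_
  obtain ⟨b₁, hb₁, hb₁_le⟩ := hB y₂ hy₂
  obtain ⟨a₂, ha₂, hle_a₂⟩ := hA y₁ hy₁
  exact ⟨c₁.out hb₁ hy₁ ⟨hb₁_le, hle⟩, c₂.out hy₂ ha₂ ⟨hle, hle_a₂⟩⟩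

end LinearOrder

theorem topkis_iff_exists_le {L : Type*} [LinearOrder L] (I₁ I₂ : Set L)
    (h₁ : I₁.Nonempty) (h₂ : I₂.Nonempty)
    (c₁ : I₁.OrdConnected) (c₂ : I₂.OrdConnected) :
    topkis I₁ I₂ ↔
      ((∀ a₁ ∈ I₁, ∃ a₂ ∈ I₂, a₁ ≤ a₂) ∧ (∀ b₂ ∈ I₂, ∃ b₁ ∈ I₁, b₁ ≤ b₂)) :=
  ⟨fun h => ⟨fun _ ha₁ => h.exists_mem_right_ge h₂ ha₁, fun _ hb₂ => h.exists_mem_left_le h₁ hb₂⟩,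
    fun ⟨hA, hB⟩ => topkis_of_forall_exists_le c₁ c₂ hA hB⟩
end

section
/- Let φ, ψ be decreasing surjective correspondences from a complete linear lattice M to a complete linear lattice L. Then the inverse correspondences φ⁻¹, ψ⁻¹ map L to nonempty intervals of M, are decreasing, and φ ⊑ ψ holds (pointwise) if and only if φ⁻¹ ⊑ ψ⁻¹ (pointwise). -/
/-- The inverse correspondence. -/
def invCorr {M L : Type*} (φ : M → Set L) (y : L) : Set M := {x | y ∈ φ x}

/-!
Read in the product `M × L`, `y ∈ φ x` and `x ∈ invCorr φ y` are the same relation, so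
`invCorr (invCorr φ) = φ` and the converse of the equivalence is the forward implication applied
to the inverse correspondences. In a linear order `{a ⊓ b, a ⊔ b} = {a, b}`, so the Topkis relation
only asks that `b ∈ A` and `a ∈ B` whenever `a ∈ A`, `b ∈ B`, `b ≤ a`; the forward implication
then reduces to showing `y ∈ S` from `y ⊔ a ∈ S` and `a ⊓ y ∈ S`, one of which is `y` itself.
-/

theorem topkis_iff_forall_le_s8 {α : Type*} [LinearOrder α] {A B : Set α} :
    topkis A B ↔ ∀ a ∈ A, ∀ b ∈ B, b ≤ a → b ∈ A ∧ a ∈ B := by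
  constructor
  · intro h a ha b hb hba
    simpa only [inf_eq_right.mpr hba, sup_eq_left.mpr hba] using h a ha b hb
  · intro h a ha b hb
    rcases le_total a b with hab | hba
    · rw [inf_eq_left.mpr hab, sup_eq_right.mpr hab]
      exact ⟨ha, hb⟩
    · rw [inf_eq_right.mpr hba, sup_eq_left.mpr hba]
      exact h a ha b hb hba

theorem Set.mem_of_sup_mem_of_inf_mem {α : Type*} [LinearOrder α] {S : Set α} {a y : α}
    (hsup : y ⊔ a ∈ S) (hinf : a ⊓ y ∈ S) : y ∈ S := by
  rcases le_total y a with hya | hay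
  · rwa [inf_eq_right.mpr hya] at hinf
  · rwa [sup_eq_left.mpr hay] at hsup

theorem invCorr_invCorr {M L : Type*} (φ : M → Set L) : invCorr (invCorr φ) = φ := rfl

theorem invCorr_ordConnected {M L : Type*} [Preorder M] [Lattice L] {φ : M → Set L}
    (hne : ∀ x, (φ x).Nonempty) (hdec : ∀ x₁ x₂ : M, x₁ ≤ x₂ → topkis (φ x₂) (φ x₁)) (y : L) :
    (invCorr φ y).OrdConnected := by
  refine ⟨fun x₁ hx₁ x₂ hx₂ x hx => ?_⟩
  obtain ⟨z, hz⟩ := hne x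
  have hsup : y ⊔ z ∈ φ x := (hdec x x₂ hx.2 y hx₂ z hz).2
  show y ∈ φ x
  simpa only [inf_eq_right.mpr (le_sup_left : y ≤ y ⊔ z)] using
    (hdec x₁ x hx.1 (y ⊔ z) hsup y hx₁).1

theorem invCorr_decreasing {M L : Type*} [LinearOrder M] [Lattice L] {φ : M → Set L}
    (hdec : ∀ x₁ x₂ : M, x₁ ≤ x₂ → topkis (φ x₂) (φ x₁)) {y₁ y₂ : L} (hy : y₁ ≤ y₂) :
    topkis (invCorr φ y₂) (invCorr φ y₁) := by
  refine topkis_iff_forall_le_s8.mpr fun x₂ hx₂ x₁ hx₁ hx => ?_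
  have h := hdec x₁ x₂ hx y₂ hx₂ y₁ hx₁
  rw [inf_eq_right.mpr hy, sup_eq_left.mpr hy] at h
  exact h.symm

theorem topkis_invCorr_of_topkis {M L : Type*} [LinearOrder M] [LinearOrder L]
    {φ ψ : M → Set L} (hφne : ∀ x, (φ x).Nonempty) (hψne : ∀ x, (ψ x).Nonempty)
    (hφdec : ∀ x₁ x₂ : M, x₁ ≤ x₂ → topkis (φ x₂) (φ x₁))
    (hψdec : ∀ x₁ x₂ : M, x₁ ≤ x₂ → topkis (ψ x₂) (ψ x₁))
    (h : ∀ x, topkis (φ x) (ψ x)) (y : L) : topkis (invCorr φ y) (invCorr ψ y) := by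
  refine topkis_iff_forall_le_s8.mpr fun x₁ hx₁ x₂ hx₂ hx => ?_
  obtain ⟨a, ha⟩ := hφne x₂
  obtain ⟨b, hb⟩ := hψne x₁
  show y ∈ φ x₂ ∧ y ∈ ψ x₁
  exact ⟨Set.mem_of_sup_mem_of_inf_mem (hφdec x₂ x₁ hx y hx₁ a ha).2 (h x₂ a ha y hx₂).1,
    Set.mem_of_sup_mem_of_inf_mem (h x₁ y hx₁ b hb).2 (hψdec x₂ x₁ hx b hb y hx₂).1⟩

theorem inverse_of_decreasing_surjective_general {M L : Type*}
    [CompleteLinearOrder M] [CompleteLinearOrder L] (φ ψ : M → Set L)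
    (hφne : ∀ x, (φ x).Nonempty)
    (hψne : ∀ x, (ψ x).Nonempty)
    (hφdec : ∀ x₁ x₂ : M, x₁ ≤ x₂ → topkis (φ x₂) (φ x₁))
    (hψdec : ∀ x₁ x₂ : M, x₁ ≤ x₂ → topkis (ψ x₂) (ψ x₁))
    (hφsurj : ∀ y : L, ∃ x, y ∈ φ x) (hψsurj : ∀ y : L, ∃ x, y ∈ ψ x) :
    (∀ y : L, (invCorr φ y).Nonempty ∧ (invCorr φ y).OrdConnected ∧
       (invCorr ψ y).Nonempty ∧ (invCorr ψ y).OrdConnected) ∧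
    (∀ y₁ y₂ : L, y₁ ≤ y₂ →
       topkis (invCorr φ y₂) (invCorr φ y₁) ∧ topkis (invCorr ψ y₂) (invCorr ψ y₁)) ∧
    ((∀ x : M, topkis (φ x) (ψ x)) ↔ (∀ y : L, topkis (invCorr φ y) (invCorr ψ y))) := by
  refine ⟨fun y => ⟨hφsurj y, invCorr_ordConnected hφne hφdec y,
      hψsurj y, invCorr_ordConnected hψne hψdec y⟩,
    fun y₁ y₂ hy => ⟨invCorr_decreasing hφdec hy, invCorr_decreasing hψdec hy⟩,
    topkis_invCorr_of_topkis hφne hψne hφdec hψdec, fun h => ?_⟩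
  rw [← invCorr_invCorr φ, ← invCorr_invCorr ψ]
  exact topkis_invCorr_of_topkis hφsurj hψsurj (fun _ _ => invCorr_decreasing hφdec)
    (fun _ _ => invCorr_decreasing hψdec) h

theorem inverse_of_decreasing_surjective {M L : Type*}
    [CompleteLinearOrder M] [CompleteLinearOrder L] (φ ψ : M → Set L)
    (hφne : ∀ x, (φ x).Nonempty) (hφc : ∀ x, (φ x).OrdConnected)
    (hψne : ∀ x, (ψ x).Nonempty) (hψc : ∀ x, (ψ x).OrdConnected)
    (hφdec : ∀ x₁ x₂ : M, x₁ ≤ x₂ → topkis (φ x₂) (φ x₁))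
    (hψdec : ∀ x₁ x₂ : M, x₁ ≤ x₂ → topkis (ψ x₂) (ψ x₁))
    (hφsurj : ∀ y : L, ∃ x, y ∈ φ x) (hψsurj : ∀ y : L, ∃ x, y ∈ ψ x) :
    (∀ y : L, (invCorr φ y).Nonempty ∧ (invCorr φ y).OrdConnected ∧
       (invCorr ψ y).Nonempty ∧ (invCorr ψ y).OrdConnected) ∧
    (∀ y₁ y₂ : L, y₁ ≤ y₂ →
       topkis (invCorr φ y₂) (invCorr φ y₁) ∧ topkis (invCorr ψ y₂) (invCorr ψ y₁)) ∧
    ((∀ x : M, topkis (φ x) (ψ x)) ↔ (∀ y : L, topkis (invCorr φ y) (invCorr ψ y))) :=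
  inverse_of_decreasing_surjective_general φ ψ hφne hψne hφdec hψdec hφsurj hψsurj
end

section
/- Every minitive (necessity) measure μ : S → M is a lower chain measure: there exists a chain K ⊆ S containing ∅ and Ω such that μ(A) = ⋁{ μ(K) | K ∈ K, K ⊆ A } for all A ∈ S. -/
/-!
For a level `m`, the intersection of all sets of `S` of measure at least `m` lies in `S` and, by
minitivity, still has measure at least `m`: it is the least set of `S` of measure `≥ m`. These
least sets increase with `m`, so they form a chain, and every `A ∈ S` contains the least set of
level `μ A`, whose measure is exactly `μ A`.
-/

open Set

section Minitive

variable {Ω M : Type*} [CompleteLinearOrder M] {S : Set (Set Ω)} {μ : Set Ω → M}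

theorem monotoneOn_of_minitive (hmin : ∀ 𝒜 ⊆ S, μ (⋂₀ 𝒜) = ⨅ A ∈ 𝒜, μ A) : MonotoneOn μ S := by
  intro A hA B hB hAB
  have hpair : ({A, B} : Set (Set Ω)) ⊆ S := insert_subset hA (singleton_subset_iff.mpr hB)
  have h := hmin _ hpair
  rw [sInter_pair, inter_eq_left.mpr hAB, iInf_pair] at h
  exact inf_eq_left.mp h.symm

variable (S μ) in
def leastSetAbove (m : M) : Set Ω :=
  ⋂₀ {A ∈ S | m ≤ μ A}

theorem leastSetAbove_mem (hInter : ∀ 𝒜 ⊆ S, ⋂₀ 𝒜 ∈ S) (m : M) : leastSetAbove S μ m ∈ S :=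
  hInter _ fun _ hA => hA.1

theorem le_measure_leastSetAbove (hmin : ∀ 𝒜 ⊆ S, μ (⋂₀ 𝒜) = ⨅ A ∈ 𝒜, μ A) (m : M) :
    m ≤ μ (leastSetAbove S μ m) := by
  rw [leastSetAbove, hmin _ fun _ hA => hA.1]
  exact le_iInf₂ fun _ hA => hA.2

theorem leastSetAbove_subset {m : M} {A : Set Ω} (hA : A ∈ S) (hm : m ≤ μ A) :
    leastSetAbove S μ m ⊆ A :=
  sInter_subset_of_mem ⟨hA, hm⟩

theorem leastSetAbove_mono : Monotone (leastSetAbove S μ) :=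
  fun _ _ hmm' => sInter_subset_sInter fun _ hA => ⟨hA.1, hmm'.trans hA.2⟩

theorem leastSetAbove_bot (hempty : ∅ ∈ S) : leastSetAbove S μ ⊥ = ∅ :=
  subset_empty_iff.mp (leastSetAbove_subset hempty bot_le)

theorem measure_leastSetAbove_measure (hInter : ∀ 𝒜 ⊆ S, ⋂₀ 𝒜 ∈ S)
    (hmin : ∀ 𝒜 ⊆ S, μ (⋂₀ 𝒜) = ⨅ A ∈ 𝒜, μ A) {A : Set Ω} (hA : A ∈ S) :
    μ (leastSetAbove S μ (μ A)) = μ A :=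
  le_antisymm
    (monotoneOn_of_minitive hmin (leastSetAbove_mem hInter _) hA (leastSetAbove_subset hA le_rfl))
    (le_measure_leastSetAbove hmin _)

variable (S μ) in
theorem isChain_insert_univ_range_leastSetAbove :
    IsChain (· ⊆ ·) (insert univ (range (leastSetAbove S μ))) :=
  leastSetAbove_mono.isChain_range.insert fun _ _ _ => Or.inr (subset_univ _)

end Minitive

theorem minitive_is_lower_chain_measure_general {Ω : Type*} {M : Type*} [CompleteLinearOrder M]
    (S : Set (Set Ω)) (hempty : ∅ ∈ S)
    (hInter : ∀ 𝒜 ⊆ S, ⋂₀ 𝒜 ∈ S)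
    (μ : Set Ω → M)
    (hmin : ∀ 𝒜 ⊆ S, μ (⋂₀ 𝒜) = ⨅ A ∈ 𝒜, μ A) :
    ∃ K ⊆ S, ∅ ∈ K ∧ Set.univ ∈ K ∧ IsChain (· ⊆ ·) K ∧
      ∀ A ∈ S, μ A = sSup (μ '' {B ∈ K | B ⊆ A}) := by
  have hK : insert univ (range (leastSetAbove S μ)) ⊆ S := by
    rintro B (rfl | ⟨m, rfl⟩)
    · simpa using hInter ∅ (empty_subset S)
    · exact leastSetAbove_mem hInter m
  refine ⟨_, hK, Or.inr ⟨⊥, leastSetAbove_bot hempty⟩, mem_insert _ _,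
    isChain_insert_univ_range_leastSetAbove S μ, fun A hA => ?_⟩
  refine (IsGreatest.csSup_eq ⟨?_, ?_⟩).symm
  · exact ⟨_, ⟨Or.inr (mem_range_self _), leastSetAbove_subset hA le_rfl⟩,
      measure_leastSetAbove_measure hInter hmin hA⟩
  · rintro _ ⟨B, ⟨hBK, hBA⟩, rfl⟩
    exact monotoneOn_of_minitive hmin (hK hBK) hA hBA

theorem minitive_is_lower_chain_measure {Ω : Type*} {M : Type*} [CompleteLinearOrder M]
    (S : Set (Set Ω)) (hempty : ∅ ∈ S) (huniv : Set.univ ∈ S)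
    (hInter : ∀ 𝒜 ⊆ S, ⋂₀ 𝒜 ∈ S)
    (μ : Set Ω → M) (hbot : μ ∅ = ⊥) (htop : μ Set.univ = ⊤)
    (hmono : ∀ A ∈ S, ∀ B ∈ S, A ⊆ B → μ A ≤ μ B)
    (hmin : ∀ 𝒜 ⊆ S, μ (⋂₀ 𝒜) = ⨅ A ∈ 𝒜, μ A) :
    ∃ K ⊆ S, ∅ ∈ K ∧ Set.univ ∈ K ∧ IsChain (· ⊆ ·) K ∧
      ∀ A ∈ S, μ A = sSup (μ '' {B ∈ K | B ⊆ A}) :=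
  minitive_is_lower_chain_measure_general S hempty hInter μ hmin
end
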